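/- Let G be a connected oriented graph with all path counts finite, and let u be a vertex lying on at least one loop (f_{uu}^G(n) ≥ 1 for some n ≥ 1). Then R(G) < L_{uu}(G) if and only if ∑_{n≥1} f_{uu}^G(n) L_{uu}(G)^n > 1, the sum being taken in [0,∞]. -/

import Mathlib

open Filter Set
open scoped ENNReal NNReal

/-- An oriented graph: a set of vertices and arrows (at most one arrow `u → v`
for each ordered pair), every arrow joining two vertices of the graph. -/
structure OGraph (V : Type*) where
  verts : Set V
  Adj : V → V → Prop
  mem_of_adj : ∀ ⦃u v⦄, Adj u v → u ∈ verts ∧ v ∈ verts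

namespace OGraph

variable {V W : Type*}

/-- `H` is a subgraph of `G`. -/
def IsSubgraph (H G : OGraph V) : Prop :=
  H.verts ⊆ G.verts ∧ ∀ ⦃u v⦄, H.Adj u v → G.Adj u v

/-- The set of paths `(u_0, …, u_n)` of length `n` from `u` to `v` in `G`. -/
def pathSet (G : OGraph V) (u v : V) (n : ℕ) : Set (Fin (n + 1) → V) :=
  {f | f 0 = u ∧ f (Fin.last n) = v ∧ (∀ i, f i ∈ G.verts) ∧
    ∀ i : Fin n, G.Adj (f i.castSucc) (f i.succ)}

/-- `p_{uv}^G(n)`: the number of paths of length `n` from `u` to `v` in `G`. -/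
noncomputable def pCount (G : OGraph V) (u v : V) (n : ℕ) : ℕ :=
  (G.pathSet u v n).ncard

/-- All path counts of `G` are finite. -/
def FiniteCounts (G : OGraph V) : Prop := ∀ u v n, (G.pathSet u v n).Finite

/-- `G` is (strongly) connected: there is a path between any two vertices. -/
def Connected (G : OGraph V) : Prop :=
  ∀ u ∈ G.verts, ∀ v ∈ G.verts, ∃ n, (G.pathSet u v n).Nonempty

/-- The set of paths `(u_0, …, u_n)` from `u` to `v` avoiding `v` strictly in between. -/
def fpathSet (G : OGraph V) (u v : V) (n : ℕ) : Set (Fin (n + 1) → V) :=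
  {f ∈ G.pathSet u v n | ∀ i : Fin (n + 1), i ≠ 0 → i ≠ Fin.last n → f i ≠ v}

/-- `f_{uv}^G(n)`: the number of paths `(u_0, …, u_n)` with `u_0 = u`, `u_n = v` and
`u_i ≠ v` for `0 < i < n` (set to `0` for `n = 0`). -/
noncomputable def fCount (G : OGraph V) (u v : V) (n : ℕ) : ℕ :=
  if n = 0 then 0 else (G.fpathSet u v n).ncard

/-- The radius of convergence of the power series `∑ a_n zⁿ`. -/
noncomputable def radius (a : ℕ → ℕ) : ℝ≥0∞ :=
  ⨆ (r : ℝ≥0) (_ : ∃ C : ℝ, ∀ n, (a n : ℝ) * (r : ℝ) ^ n ≤ C), (r : ℝ≥0∞)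

/-- `R_{uv}(G)`: the radius of convergence of `∑ p_{uv}^G(n) zⁿ`. -/
noncomputable def pRadius (G : OGraph V) (u v : V) : ℝ≥0∞ := radius (G.pCount u v)

/-- `L_{uv}(G)`: the radius of convergence of `∑_{n ≥ 1} f_{uv}^G(n) zⁿ`. -/
noncomputable def fRadius (G : OGraph V) (u v : V) : ℝ≥0∞ := radius (G.fCount u v)

/-- `R(G)`; for a connected graph it coincides with every `R_{uv}(G)`. -/
noncomputable def gRadius (G : OGraph V) : ℝ≥0∞ :=
  ⨅ u ∈ G.verts, ⨅ v ∈ G.verts, G.pRadius u v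

/-- The Gurevich entropy `h(G) = - log R(G)`. -/
noncomputable def entropy (G : OGraph V) : EReal := - ENNReal.log G.gRadius

/-- The exponential growth rate `limsup (1/n) log a_n` (with `log 0 = -∞`). -/
noncomputable def egrowth (a : ℕ → ℕ) : EReal :=
  Filter.atTop.limsup fun n : ℕ => (((n : ℝ)⁻¹ : ℝ) : EReal) * ENNReal.log ((a n : ℝ≥0∞))

/-- The entropy of a (not necessarily connected) graph:
`sup_{u ∈ V(H)} limsup (1/n) log p_{uu}^H(n)`. -/
noncomputable def supEntropy (G : OGraph V) : EReal :=
  ⨆ u ∈ G.verts, egrowth (G.pCount u u)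

/-- `∑_{n ≥ 1} f_{uu}^G(n) xⁿ`, in `[0, ∞]`. -/
noncomputable def loopSum (G : OGraph V) (u : V) (x : ℝ≥0∞) : ℝ≥0∞ :=
  ∑' n : ℕ, (G.fCount u u n : ℝ≥0∞) * x ^ n

/-- `∑_{n ≥ 1} n f_{uu}^G(n) xⁿ`, in `[0, ∞]`. -/
noncomputable def loopMeanSum (G : OGraph V) (u : V) (x : ℝ≥0∞) : ℝ≥0∞ :=
  ∑' n : ℕ, (n : ℝ≥0∞) * (G.fCount u u n : ℝ≥0∞) * x ^ n

/-- A connected graph is transient if `∑_{n ≥ 1} f_{uu}^G(n) R(G)ⁿ < 1`. -/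
def Transient (G : OGraph V) : Prop := ∀ u ∈ G.verts, G.loopSum u G.gRadius < 1

/-- A connected graph is recurrent if `∑_{n ≥ 1} f_{uu}^G(n) R(G)ⁿ = 1`. -/
def Recurrent (G : OGraph V) : Prop := ∀ u ∈ G.verts, G.loopSum u G.gRadius = 1

/-- Positive recurrent: recurrent and `∑_{n ≥ 1} n f_{uu}^G(n) R(G)ⁿ < ∞`. -/
def PosRecurrent (G : OGraph V) : Prop :=
  G.Recurrent ∧ ∀ u ∈ G.verts, G.loopMeanSum u G.gRadius < ⊤

/-- Null recurrent: recurrent and `∑_{n ≥ 1} n f_{uu}^G(n) R(G)ⁿ = ∞`. -/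
def NullRecurrent (G : OGraph V) : Prop :=
  G.Recurrent ∧ ∀ u ∈ G.verts, G.loopMeanSum u G.gRadius = ⊤

/-- `G` embeds in `H` via `ι` (`G ⊂ H` after identifying `V(G)` with its image). -/
def Embeds (G : OGraph V) (H : OGraph W) (ι : V → W) : Prop :=
  Function.Injective ι ∧ (∀ v ∈ G.verts, ι v ∈ H.verts) ∧
    ∀ ⦃u v⦄, G.Adj u v → H.Adj (ι u) (ι v)

/-- `G` embeds in `H` via `ι` as a proper subgraph (`G ⊊ H`). -/
def ProperEmbeds (G : OGraph V) (H : OGraph W) (ι : V → W) : Prop :=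
  G.Embeds H ι ∧
    ¬ ((∀ w ∈ H.verts, w ∈ ι '' G.verts) ∧ ∀ ⦃a b⦄, H.Adj (ι a) (ι b) → G.Adj a b)

end OGraph

/-!
Decomposing a loop at `u` according to its first return to `u` gives the renewal equation
`P(x) = 1 + F(x) P(x)` for `P(x) = ∑ p_{uu}(n) xⁿ` and `F = loopSum u`. Hence `P(x) < ∞` when
`F(x) < 1` and `P(x) = ∞` when `F(x) > 1`, so `R(G) = R_{uu}(G)` (by connectivity) lies above
every `x` with `F(x) < 1` and below every `x` with `F(x) > 1`. As `u` lies on a loop, `F` is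
strictly increasing, and it is lower semicontinuous. So `F(L) ≤ 1` forces `F < 1` on `[0, L)`,
whence `L ≤ R`; and `F(L) > 1` gives some `x < L` with `F(x) > 1`, whence `R ≤ x < L`.
-/

open Finset

lemma ENNReal.tsum_mul_tsum_eq_tsum_sum_antidiagonal (a c : ℕ → ℝ≥0∞) :
    (∑' n, a n) * ∑' n, c n = ∑' n, ∑ p ∈ antidiagonal n, a p.1 * c p.2 := by
  simp_rw [← ENNReal.tsum_mul_right, ← ENNReal.tsum_mul_left]
  rw [← ENNReal.tsum_prod, ← (HasAntidiagonal.sigmaAntidiagonalEquivProd (A := ℕ)).tsum_eq,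
    ENNReal.tsum_sigma']
  exact tsum_congr fun n => Finset.tsum_subtype (antidiagonal n) fun p => a p.1 * c p.2

namespace OGraph

variable {V : Type*} {G : OGraph V} {u v w : V} {m k : ℕ}

section Renewal

def RenewalEq (a b : ℕ → ℝ≥0∞) : Prop :=
  ∀ n, b n = (if n = 0 then 1 else 0) + ∑ p ∈ antidiagonal n, a p.1 * b p.2

lemma tsum_ite_add_sum_antidiagonal (a c : ℕ → ℝ≥0∞) :
    ∑' n, ((if n = 0 then 1 else 0) + ∑ p ∈ antidiagonal n, a p.1 * c p.2) =
      1 + (∑' n, a n) * ∑' n, c n := by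
  rw [ENNReal.tsum_add, tsum_ite_eq, ENNReal.tsum_mul_tsum_eq_tsum_sum_antidiagonal]

variable {a b : ℕ → ℝ≥0∞}

lemma RenewalEq.tsum_eq (h : RenewalEq a b) :
    ∑' n, b n = 1 + (∑' n, a n) * ∑' n, b n :=
  (tsum_congr h).trans (tsum_ite_add_sum_antidiagonal a b)

lemma RenewalEq.sum_range_le (h : RenewalEq a b) (N : ℕ) :
    ∑ n ∈ range N, b n ≤ 1 + (∑' n, a n) * ∑ n ∈ range N, b n := by
  set c : ℕ → ℝ≥0∞ := fun n => if n < N then b n else 0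
  have hc : ∑' n, c n = ∑ n ∈ range N, b n := by
    rw [tsum_eq_sum (s := range N) fun n hn => if_neg (by simpa using hn)]
    exact sum_congr rfl fun n hn => if_pos (mem_range.1 hn)
  -- below `N`, the renewal equation only involves `b` below `N`
  have hbc : ∀ n ∈ range N,
      b n = (if n = 0 then 1 else 0) + ∑ p ∈ antidiagonal n, a p.1 * c p.2 := by
    intro n hn
    rw [h n]
    congr 1
    refine sum_congr rfl fun p hp => ?_
    rw [HasAntidiagonal.mem_antidiagonal] at hp
    simp only [c, if_pos (show p.2 < N by have := mem_range.1 hn; omega)]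
  calc ∑ n ∈ range N, b n
      = ∑ n ∈ range N, ((if n = 0 then 1 else 0) + ∑ p ∈ antidiagonal n, a p.1 * c p.2) :=
        sum_congr rfl hbc
    _ ≤ ∑' n, ((if n = 0 then 1 else 0) + ∑ p ∈ antidiagonal n, a p.1 * c p.2) :=
        ENNReal.sum_le_tsum _
    _ = 1 + (∑' n, a n) * ∑ n ∈ range N, b n := by rw [tsum_ite_add_sum_antidiagonal, hc]

lemma RenewalEq.tsum_ne_top (h : RenewalEq a b) (hb : ∀ n, b n ≠ ⊤) (ha : ∑' n, a n < 1) :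
    ∑' n, b n ≠ ⊤ := by
  set A := ∑' n, a n
  have hbound : ∀ N, ∑ n ∈ range N, b n ≤ (1 - A)⁻¹ := by
    intro N
    have hS : ∑ n ∈ range N, b n ≠ ⊤ := ENNReal.sum_ne_top.2 fun n _ => hb n
    rw [ENNReal.le_inv_iff_mul_le, mul_comm, ENNReal.sub_mul fun _ _ => hS, one_mul,
      tsub_le_iff_left, add_comm]
    exact h.sum_range_le N
  refine ne_top_of_le_ne_top ?_ (ENNReal.tsum_eq_iSup_nat ▸ iSup_le hbound)
  exact ENNReal.inv_ne_top.2 (tsub_pos_of_lt ha).ne'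

lemma RenewalEq.tsum_eq_top (h : RenewalEq a b) (ha : 1 < ∑' n, a n) : ∑' n, b n = ⊤ := by
  by_contra hB
  set B := ∑' n, b n
  have : B < B := calc
    B < 1 + B := by rw [add_comm]; exact ENNReal.lt_add_right hB one_ne_zero
    _ ≤ 1 + (∑' n, a n) * B := by gcongr; exact le_mul_of_one_le_left' ha.le
    _ = B := h.tsum_eq.symm
  exact this.false

end Renewal

section Radius

variable {a b : ℕ → ℕ}

lemma le_radius_of_tsum_ne_top {r : ℝ≥0} (h : ∑' n, (a n : ℝ≥0∞) * r ^ n ≠ ⊤) :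
    (r : ℝ≥0∞) ≤ radius a := by
  refine le_iSup₂_of_le r ⟨(∑' n, (a n : ℝ≥0∞) * r ^ n).toReal, fun n => ?_⟩ le_rfl
  have := ENNReal.toReal_mono h (ENNReal.le_tsum n)
  simpa using this

lemma radius_le_of_tsum_eq_top {r : ℝ≥0} (h : ∑' n, (a n : ℝ≥0∞) * r ^ n = ⊤) :
    radius a ≤ r := by
  refine iSup₂_le fun s ⟨C, hC⟩ => ?_
  by_contra! hrs
  rw [ENNReal.coe_lt_coe] at hrs
  have hs : 0 < s := hrs.pos
  have hterm : ∀ n, (a n : ℝ≥0) * r ^ n ≤ C.toNNReal * (r / s) ^ n := by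
    intro n
    have hCn : (a n : ℝ≥0) * s ^ n ≤ C.toNNReal := by
      rw [← NNReal.coe_le_coe, Real.coe_toNNReal']
      push_cast
      exact (hC n).trans (le_max_left _ _)
    calc (a n : ℝ≥0) * r ^ n = (a n : ℝ≥0) * s ^ n * (r / s) ^ n := by
          rw [div_pow, mul_assoc, mul_div_cancel₀ _ (pow_pos hs n).ne']
      _ ≤ C.toNNReal * (r / s) ^ n := by gcongr
  have hsum : Summable fun n => (a n : ℝ≥0) * r ^ n :=
    NNReal.summable_of_le hterm
      ((NNReal.summable_geometric ((div_lt_one hs).2 hrs)).mul_left _)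
  exact (ENNReal.tsum_coe_ne_top_iff_summable.2 hsum) (by exact_mod_cast h)

lemma radius_le_radius_of_le_add (d : ℕ) (h : ∀ n, a n ≤ b (n + d)) : radius b ≤ radius a := by
  refine iSup₂_le fun s ⟨C, hC⟩ => ?_
  rcases eq_or_ne s 0 with rfl | hs
  · simp
  have hsd : (0 : ℝ) < (s : ℝ) ^ d := pow_pos (by positivity) d
  refine le_iSup₂_of_le s ⟨C / (s : ℝ) ^ d, fun n => ?_⟩ le_rfl
  rw [le_div_iff₀ hsd, mul_assoc, ← pow_add]
  calc (a n : ℝ) * (s : ℝ) ^ (n + d) ≤ b (n + d) * (s : ℝ) ^ (n + d) := by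
        gcongr; exact_mod_cast h n
    _ ≤ C := hC (n + d)

end Radius

section Paths

def pathAppend {m k : ℕ} (f : Fin (m + 1) → V) (g : Fin (k + 1) → V) : Fin (m + k + 1) → V :=
  fun i => if h : (i : ℕ) ≤ m then f ⟨i, by omega⟩ else g ⟨i - m, by omega⟩

def pathTake (m : ℕ) {k : ℕ} (h : Fin (m + k + 1) → V) : Fin (m + 1) → V :=
  fun i => h ⟨i, by omega⟩

def pathDrop (m : ℕ) {k : ℕ} (h : Fin (m + k + 1) → V) : Fin (k + 1) → V :=
  fun j => h ⟨m + j, by omega⟩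

variable {f : Fin (m + 1) → V} {g : Fin (k + 1) → V}

lemma pathAppend_of_le {i : ℕ} (hi : i ≤ m) (hik : i < m + k + 1) :
    pathAppend f g ⟨i, hik⟩ = f ⟨i, by omega⟩ :=
  dif_pos hi

lemma pathAppend_of_ge (hfg : f (Fin.last m) = g 0) {i : ℕ} (hi : m ≤ i) (hik : i < m + k + 1) :
    pathAppend f g ⟨i, hik⟩ = g ⟨i - m, by omega⟩ := by
  unfold pathAppend
  dsimp only
  split_ifs with h
  · obtain rfl : i = m := by omega
    convert hfg using 2
    all_goals exact Fin.ext (by simp)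
  · rfl

@[simp]
lemma pathTake_pathAppend : pathTake m (pathAppend f g) = f :=
  funext fun i => pathAppend_of_le (by omega) _

lemma pathDrop_pathAppend (hfg : f (Fin.last m) = g 0) : pathDrop m (pathAppend f g) = g :=
  funext fun j => (pathAppend_of_ge hfg (by omega) _).trans (by simp)

lemma pathAppend_pathTake_pathDrop (h : Fin (m + k + 1) → V) :
    pathAppend (pathTake m h) (pathDrop m h) = h := by
  funext ⟨i, hi⟩
  unfold pathAppend pathTake pathDrop
  dsimp only
  split_ifs
  · rfl
  · congr; omega

lemma pathAppend_injOn :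
    Set.InjOn (fun p : (Fin (m + 1) → V) × (Fin (k + 1) → V) => pathAppend p.1 p.2)
      {p | p.1 (Fin.last m) = p.2 0} := by
  rintro ⟨f, g⟩ hfg ⟨f', g'⟩ hfg' he
  have hdrop := congrArg (pathDrop m) he
  simp only [pathDrop_pathAppend hfg, pathDrop_pathAppend hfg'] at hdrop
  exact Prod.ext (by simpa using congrArg (pathTake m) he) hdrop

lemma mem_pathSet_iff {n : ℕ} {h : Fin (n + 1) → V} :
    h ∈ G.pathSet u v n ↔ h ⟨0, by omega⟩ = u ∧ h ⟨n, by omega⟩ = v ∧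
      (∀ i (hi : i ≤ n), h ⟨i, by omega⟩ ∈ G.verts) ∧
      ∀ i (hi : i < n), G.Adj (h ⟨i, by omega⟩) (h ⟨i + 1, by omega⟩) :=
  and_congr_right' <| and_congr_right' <| and_congr ⟨fun H i _ => H _, fun H i => H i (by omega)⟩
    ⟨fun H i hi => H ⟨i, hi⟩, fun H i => H i i.isLt⟩

lemma pathAppend_mem_pathSet {f : Fin (m + 1) → V} {g : Fin (k + 1) → V}
    (hf : f ∈ G.pathSet u w m) (hg : g ∈ G.pathSet w v k) :
    pathAppend f g ∈ G.pathSet u v (m + k) := by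
  have hfg : f (Fin.last m) = g 0 := hf.2.1.trans hg.1.symm
  rw [mem_pathSet_iff] at hf hg ⊢
  refine ⟨?_, ?_, fun i hi => ?_, fun i hi => ?_⟩
  · rw [pathAppend_of_le (Nat.zero_le m)]
    exact hf.1
  · rw [pathAppend_of_ge hfg (by omega)]
    simpa using hg.2.1
  · by_cases him : i ≤ m
    · rw [pathAppend_of_le him]; exact hf.2.2.1 i him
    · rw [pathAppend_of_ge hfg (by omega)]; exact hg.2.2.1 _ (by omega)
  · by_cases him : i < m
    · rw [pathAppend_of_le him.le, pathAppend_of_le him]; exact hf.2.2.2 i him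
    · rw [pathAppend_of_ge hfg (by omega), pathAppend_of_ge hfg (by omega)]
      convert hg.2.2.2 (i - m) (by omega) using 3
      omega

lemma pathTake_mem_pathSet {h : Fin (m + k + 1) → V} (hh : h ∈ G.pathSet u v (m + k)) :
    pathTake m h ∈ G.pathSet u (h ⟨m, by omega⟩) m := by
  rw [mem_pathSet_iff] at hh ⊢
  exact ⟨hh.1, rfl, fun i hi => hh.2.2.1 i (by omega), fun i hi => hh.2.2.2 i (by omega)⟩

lemma pathDrop_mem_pathSet {h : Fin (m + k + 1) → V} (hh : h ∈ G.pathSet u v (m + k)) :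
    pathDrop m h ∈ G.pathSet (h ⟨m, by omega⟩) v k := by
  rw [mem_pathSet_iff] at hh ⊢
  exact ⟨rfl, hh.2.1, fun i hi => hh.2.2.1 _ (by omega),
    fun i hi => hh.2.2.2 (m + i) (by omega)⟩

end Paths

def FirstReturnAt (u : V) {n : ℕ} (h : Fin (n + 1) → V) (i : ℕ) : Prop :=
  0 < i ∧ ∃ hi : i ≤ n, h ⟨i, by omega⟩ = u ∧
    ∀ k (_ : 0 < k) (hki : k < i), h ⟨k, by omega⟩ ≠ u

lemma FirstReturnAt.unique {n i i' : ℕ} {h : Fin (n + 1) → V} (hi : FirstReturnAt u h i)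
    (hi' : FirstReturnAt u h i') : i = i' := by
  obtain ⟨hi0, hin, hiu, hbefore⟩ := hi
  obtain ⟨hi0', hin', hiu', hbefore'⟩ := hi'
  by_contra hne
  rcases Nat.lt_or_gt_of_ne hne with hlt | hlt
  · exact hbefore' i hi0 hlt hiu
  · exact hbefore i' hi0' hlt hiu'

lemma exists_firstReturnAt {n : ℕ} (hn : 0 < n) {h : Fin (n + 1) → V}
    (hh : h ∈ G.pathSet u u n) : ∃ i, FirstReturnAt u h i := by
  classical
  have hex : ∃ i, 0 < i ∧ ∃ hi : i ≤ n, h ⟨i, by omega⟩ = u := ⟨n, hn, le_rfl, hh.2.1⟩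
  obtain ⟨hpos, hle, hu⟩ := Nat.find_spec hex
  exact ⟨Nat.find hex, hpos, hle, hu,
    fun k hk hki hku => Nat.find_min hex hki ⟨hk, by omega, hku⟩⟩

lemma setOf_firstReturnAt_eq_image {i : ℕ} (hi : 0 < i) (j : ℕ) :
    {h ∈ G.pathSet u u (i + j) | FirstReturnAt u h i} =
      (fun p => pathAppend p.1 p.2) '' (G.fpathSet u u i ×ˢ G.pathSet u u j) := by
  ext h
  constructor
  · rintro ⟨hh, hret⟩
    obtain ⟨-, _, hiu, hbefore⟩ := hret
    refine ⟨(pathTake i h, pathDrop i h), ⟨⟨?_, fun k hk0 hkl => ?_⟩, ?_⟩,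
      pathAppend_pathTake_pathDrop h⟩
    · simpa only [hiu] using pathTake_mem_pathSet hh
    · exact hbefore k (Nat.pos_of_ne_zero fun h0 => hk0 (Fin.ext h0))
        (lt_of_le_of_ne (by omega) fun hl => hkl (Fin.ext hl))
    · simpa only [hiu] using pathDrop_mem_pathSet hh
  · rintro ⟨⟨f, g⟩, ⟨⟨hf, hmid⟩, hg⟩, rfl⟩
    dsimp only at hf hg hmid ⊢
    refine ⟨pathAppend_mem_pathSet hf hg, hi, by omega, ?_, fun k hk hki => ?_⟩
    · rw [pathAppend_of_le le_rfl]
      exact hf.2.1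
    · rw [pathAppend_of_le hki.le]
      exact hmid ⟨k, by omega⟩ (by simp [Fin.ext_iff]; omega) (by simp [Fin.ext_iff]; omega)

lemma ncard_setOf_firstReturnAt (i j : ℕ) :
    {h ∈ G.pathSet u u (i + j) | FirstReturnAt u h i}.ncard =
      G.fCount u u i * G.pCount u u j := by
  rcases i.eq_zero_or_pos with rfl | hi
  · simp [FirstReturnAt, fCount]
  have hinj : Set.InjOn (fun p : (Fin (i + 1) → V) × (Fin (j + 1) → V) => pathAppend p.1 p.2)
      (G.fpathSet u u i ×ˢ G.pathSet u u j) :=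
    pathAppend_injOn.mono fun p hp => hp.1.1.2.1.trans hp.2.1.symm
  rw [setOf_firstReturnAt_eq_image hi, hinj.ncard_image, Set.ncard_prod, fCount,
    if_neg hi.ne', pCount]

lemma pCount_zero (hu : u ∈ G.verts) : G.pCount u u 0 = 1 := by
  rw [pCount, Set.ncard_eq_one]
  refine ⟨fun _ => u, Set.eq_singleton_iff_unique_mem.2 ⟨⟨rfl, rfl, fun _ => hu, Fin.elim0⟩,
    fun h hh => funext fun i => ?_⟩⟩
  rw [Fin.fin_one_eq_zero i]
  exact hh.1

/-- Split a loop at `u` at its first return to `u`. -/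
lemma pCount_self_eq (hfin : G.FiniteCounts) (hu : u ∈ G.verts) (n : ℕ) :
    G.pCount u u n = (if n = 0 then 1 else 0) +
      ∑ p ∈ antidiagonal n, G.fCount u u p.1 * G.pCount u u p.2 := by
  rcases n.eq_zero_or_pos with rfl | hn
  · simp [pCount_zero hu, fCount]
  rw [if_neg hn.ne', zero_add]
  set A : ℕ × ℕ → Set (Fin (n + 1) → V) :=
    fun p => {h ∈ G.pathSet u u n | FirstReturnAt u h p.1}
  have hcover : G.pathSet u u n = ⋃ p ∈ (antidiagonal n : Set (ℕ × ℕ)), A p := by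
    refine Set.Subset.antisymm (fun h hh => ?_) (Set.iUnion₂_subset fun p _ => Set.sep_subset _ _)
    obtain ⟨i, hi⟩ := exists_firstReturnAt hn hh
    exact Set.mem_biUnion (x := (i, n - i))
      (mem_coe.2 (HasAntidiagonal.mem_antidiagonal.2 (by have := hi.2.1; omega))) ⟨hh, hi⟩
  have hdisj : (antidiagonal n : Set (ℕ × ℕ)).PairwiseDisjoint A := by
    intro p hp q hq hpq
    refine Set.disjoint_left.2 fun h hhp hhq => hpq ?_
    rw [mem_coe, HasAntidiagonal.mem_antidiagonal] at hp hq
    have := hhp.2.unique hhq.2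
    exact Prod.ext this (by omega)
  rw [pCount, hcover, Set.Finite.ncard_biUnion (finite_toSet _)
    (fun p _ => (hfin u u n).subset (Set.sep_subset _ _)) hdisj, finsum_mem_coe_finset]
  refine sum_congr rfl fun ⟨i, j⟩ hij => ?_
  rw [HasAntidiagonal.mem_antidiagonal] at hij
  subst hij
  exact ncard_setOf_firstReturnAt i j

lemma pCount_le_pCount_add (hfin : G.FiniteCounts) {a b : ℕ} {P : Fin (a + 1) → V}
    {Q : Fin (b + 1) → V} (hP : P ∈ G.pathSet u v a) (hQ : Q ∈ G.pathSet w u b) (n : ℕ) :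
    G.pCount v w n ≤ G.pCount u u (a + n + b) := by
  refine Set.ncard_le_ncard_of_injOn (fun h => pathAppend (pathAppend P h) Q)
    (fun h hh => pathAppend_mem_pathSet (pathAppend_mem_pathSet hP hh) hQ) ?_ (hfin u u _)
  intro h hh h' hh' he
  have := congrArg (fun x => pathDrop a (pathTake (a + n) x)) he
  simpa [pathDrop_pathAppend (hP.2.1.trans hh.1.symm),
    pathDrop_pathAppend (hP.2.1.trans hh'.1.symm)] using this

lemma Connected.pRadius_self_le_pRadius (hconn : G.Connected) (hfin : G.FiniteCounts)
    (hu : u ∈ G.verts) (hv : v ∈ G.verts) (hw : w ∈ G.verts) :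
    G.pRadius u u ≤ G.pRadius v w := by
  obtain ⟨a, P, hP⟩ := hconn u hu v hv
  obtain ⟨b, Q, hQ⟩ := hconn w hw u hu
  refine radius_le_radius_of_le_add (a + b) fun n => ?_
  rw [show n + (a + b) = a + n + b by ring]
  exact pCount_le_pCount_add hfin hP hQ n

lemma Connected.gRadius_eq_pRadius_self (hconn : G.Connected) (hfin : G.FiniteCounts)
    (hu : u ∈ G.verts) : G.gRadius = G.pRadius u u :=
  le_antisymm (iInf₂_le_of_le u hu (iInf₂_le u hu))
    (le_iInf₂ fun _ hv => le_iInf₂ fun _ hw => hconn.pRadius_self_le_pRadius hfin hu hv hw)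

lemma renewalEq_pCount_fCount (hfin : G.FiniteCounts) (hu : u ∈ G.verts) (r : ℝ≥0∞) :
    RenewalEq (fun n => G.fCount u u n * r ^ n) (fun n => G.pCount u u n * r ^ n) := by
  intro n
  dsimp only
  rw [pCount_self_eq hfin hu n]
  push_cast
  rw [add_mul, sum_mul]
  congr 1
  · split_ifs with hn <;> simp [hn]
  · refine sum_congr rfl fun p hp => ?_
    rw [HasAntidiagonal.mem_antidiagonal] at hp
    rw [← hp, pow_add]
    ring

lemma loopSum_zero : G.loopSum u 0 = 0 := by
  refine ENNReal.tsum_eq_zero.2 fun n => ?_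
  rcases n.eq_zero_or_pos with rfl | hn
  · simp [fCount]
  · simp [hn.ne']

lemma loopSum_mono : Monotone (G.loopSum u) :=
  fun _ _ hxy => ENNReal.tsum_le_tsum fun _ => by gcongr

lemma loopSum_lt_loopSum (hloop : ∃ n, 1 ≤ n ∧ 1 ≤ G.fCount u u n) {r L : ℝ≥0∞} (hrL : r < L)
    (hL : G.loopSum u L ≠ ⊤) : G.loopSum u r < G.loopSum u L := by
  obtain ⟨n, hn, hf⟩ := hloop
  refine ENNReal.tsum_lt_tsum (ne_top_of_le_ne_top hL (loopSum_mono hrL.le))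
    (fun _ => by gcongr) (i := n) ?_
  exact (ENNReal.mul_lt_mul_iff_right (by exact_mod_cast (by omega : G.fCount u u n ≠ 0))
    (ENNReal.natCast_ne_top _)).2 (ENNReal.pow_lt_pow_left (by omega) hrL)

lemma lowerSemicontinuous_loopSum : LowerSemicontinuous (G.loopSum u) :=
  lowerSemicontinuous_tsum fun n =>
    ((ENNReal.continuous_const_mul (ENNReal.natCast_ne_top _)).comp
      (ENNReal.continuous_pow n)).lowerSemicontinuous

lemma exists_lt_one_lt_loopSum {L : ℝ≥0∞} (h : 1 < G.loopSum u L) :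
    ∃ r : ℝ≥0, (r : ℝ≥0∞) < L ∧ 1 < G.loopSum u r := by
  have hL : 0 < L := pos_iff_ne_zero.2 fun h0 => by simp [h0, loopSum_zero] at h
  obtain ⟨l, hlL, hsub⟩ :=
    exists_Ioc_subset_of_mem_nhds (lowerSemicontinuous_loopSum L 1 h) ⟨0, hL⟩
  obtain ⟨x, hlx, hxL⟩ := exists_between hlL
  refine ⟨x.toNNReal, ?_⟩
  rw [ENNReal.coe_toNNReal hxL.ne_top]
  exact ⟨hxL, hsub ⟨hlx, hxL.le⟩⟩

end OGraph

theorem R_lt_L_iff_loopSum_gt_one_general {V : Type*} (G : OGraph V)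
    (hconn : G.Connected) (hfin : G.FiniteCounts)
    (u : V) (hu : u ∈ G.verts) (hloop : ∃ n, 1 ≤ n ∧ 1 ≤ G.fCount u u n) :
    G.gRadius < G.fRadius u u ↔ 1 < G.loopSum u (G.fRadius u u) := by
  rw [hconn.gRadius_eq_pRadius_self hfin hu]
  constructor
  · intro hlt
    by_contra! hle
    refine hlt.not_ge (ENNReal.le_of_forall_nnreal_lt fun r hr =>
      OGraph.le_radius_of_tsum_ne_top ?_)
    have hr1 : G.loopSum u r < 1 :=
      (G.loopSum_lt_loopSum hloop hr (ne_top_of_le_ne_top ENNReal.one_ne_top hle)).trans_le hle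
    exact (G.renewalEq_pCount_fCount hfin hu r).tsum_ne_top (fun n => by finiteness) hr1
  · intro h
    obtain ⟨r, hrL, hr1⟩ := G.exists_lt_one_lt_loopSum h
    exact (OGraph.radius_le_of_tsum_eq_top
      ((G.renewalEq_pCount_fCount hfin hu r).tsum_eq_top hr1)).trans_lt hrL

/-- If `u` lies on at least one loop, then `R(G) < L_{uu}(G)` if and only if
`∑_{n ≥ 1} f_{uu}^G(n) L_{uu}(G)ⁿ > 1` (the sum being taken in `[0, ∞]`). -/
theorem R_lt_L_iff_loopSum_gt_one {V : Type*} [Countable V] (G : OGraph V)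
    (hconn : G.Connected) (hfin : G.FiniteCounts)
    (u : V) (hu : u ∈ G.verts) (hloop : ∃ n, 1 ≤ n ∧ 1 ≤ G.fCount u u n) :
    G.gRadius < G.fRadius u u ↔ 1 < G.loopSum u (G.fRadius u u) :=
  R_lt_L_iff_loopSum_gt_one_general G hconn hfin u hu hloop
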